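/- Let f : [0,1]^Λ → [0,1]^Λ be the generating function associated to offspring laws (p_x)_{x∈Λ}, and let m(x,y) := Σ_{z∈N} p_x(z) z(y) ∈ [0,∞] be the mean matrix, with powers m^{(n)} defined by m^{(1)} = m and m^{(n+1)}(x,y) = Σ_{w∈Λ} m^{(n)}(x,w) m(w,y) (computed in [0,∞]). Assume m is irreducible: for all x, y ∈ Λ there exists n ≥ 1 with m^{(n)}(x,y) > 0. If s ∈ [0,1]^Λ satisfies f(s) = s and s_x < 1 for some x ∈ Λ, then s_y < 1 for every y ∈ Λ. -/

import Mathlib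

/-!
If `m(w, y) > 0` then some offspring configuration `z` of positive probability at `w` contains
a particle of type `y`, and the monomial `∏ s_t ^ z t` of that configuration is at most
`s_y < 1`. Since all monomials lie in `[0, 1]` and `p_w` sums to `1`, this forces
`s_w = f_w(s) < 1`. So `s < 1` propagates backwards along every positive entry of `m`, hence
along every positive entry of its powers, and irreducibility carries it from `x` to every `y`.
-/

/-- The generating function associated to offspring laws `p`:
`f_x(s) = Σ_{z} p_x(z) ∏_{y ∈ supp z} s_y^{z(y)}`, where `z` ranges over finitely
supported functions `Λ →₀ ℕ`. -/
noncomputable def genFun {Λ : Type*} (p : Λ → (Λ →₀ ℕ) → ℝ) (s : Λ → ℝ) : Λ → ℝ :=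
  fun x => ∑' z : Λ →₀ ℕ, p x z * ∏ y ∈ z.support, s y ^ z y

/-- The mean matrix `m(x,y) = Σ_z p_x(z) z(y)`, computed in `[0,∞]`. -/
noncomputable def meanMat {Λ : Type*} (p : Λ → (Λ →₀ ℕ) → ℝ) (x y : Λ) : ENNReal :=
  ∑' z : Λ →₀ ℕ, ENNReal.ofReal (p x z) * (z y : ENNReal)

/-- Powers of the mean matrix, computed in `[0,∞]`. -/
noncomputable def meanPow {Λ : Type*} [DecidableEq Λ] (p : Λ → (Λ →₀ ℕ) → ℝ) :
    ℕ → Λ → Λ → ENNReal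
  | 0 => fun x y => if x = y then 1 else 0
  | n + 1 => fun x y => ∑' w : Λ, meanPow p n x w * meanMat p w y

open Finset

section Monomial

variable {Λ : Type*} {s : Λ → ℝ}

lemma prod_pow_mem_Icc (hs : ∀ y, s y ∈ Set.Icc (0 : ℝ) 1) (z : Λ →₀ ℕ) :
    ∏ t ∈ z.support, s t ^ z t ∈ Set.Icc (0 : ℝ) 1 :=
  ⟨prod_nonneg fun t _ => pow_nonneg (hs t).1 _,
    prod_le_one (fun t _ => pow_nonneg (hs t).1 _) fun t _ => pow_le_one₀ (hs t).1 (hs t).2⟩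

lemma prod_pow_lt_one (hs : ∀ y, s y ∈ Set.Icc (0 : ℝ) 1) {z : Λ →₀ ℕ} {y : Λ}
    (hzy : z y ≠ 0) (hsy : s y < 1) : ∏ t ∈ z.support, s t ^ z t < 1 := by
  classical
  have hrest : ∏ t ∈ z.support.erase y, s t ^ z t ≤ 1 :=
    prod_le_one (fun t _ => pow_nonneg (hs t).1 _) fun t _ => pow_le_one₀ (hs t).1 (hs t).2
  calc ∏ t ∈ z.support, s t ^ z t
      = s y ^ z y * ∏ t ∈ z.support.erase y, s t ^ z t :=
        (mul_prod_erase _ _ (Finsupp.mem_support_iff.mpr hzy)).symm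
    _ ≤ s y ^ z y := mul_le_of_le_one_right (pow_nonneg (hs y).1 _) hrest
    _ ≤ s y := pow_le_of_le_one (hs y).1 (hs y).2 hzy
    _ < 1 := hsy

end Monomial

section MeanMatrix

variable {Λ : Type*} {p : Λ → (Λ →₀ ℕ) → ℝ}

lemma exists_pos_of_meanMat_pos {w y : Λ} (hm : 0 < meanMat p w y) :
    ∃ z : Λ →₀ ℕ, 0 < p w z ∧ z y ≠ 0 := by
  obtain ⟨z, hz⟩ := ENNReal.summable.tsum_ne_zero_iff.mp hm.ne'
  rw [mul_ne_zero_iff, ← pos_iff_ne_zero, ENNReal.ofReal_pos, Nat.cast_ne_zero] at hz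
  exact ⟨z, hz⟩

lemma exists_meanPow_pos_meanMat_pos [DecidableEq Λ] {n : ℕ} {x y : Λ}
    (h : 0 < meanPow p (n + 1) x y) : ∃ w, 0 < meanPow p n x w ∧ 0 < meanMat p w y := by
  obtain ⟨w, hw⟩ := ENNReal.summable.tsum_ne_zero_iff.mp h.ne'
  rw [mul_ne_zero_iff, ← pos_iff_ne_zero, ← pos_iff_ne_zero] at hw
  exact ⟨w, hw⟩

end MeanMatrix

section FixedPoint

variable {Λ : Type*} {p : Λ → (Λ →₀ ℕ) → ℝ} {s : Λ → ℝ}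

lemma genFun_lt_one_of_meanMat_pos {w y : Λ} (hp0 : ∀ z, 0 ≤ p w z) (hp1 : HasSum (p w) 1)
    (hs : ∀ y, s y ∈ Set.Icc (0 : ℝ) 1) (hm : 0 < meanMat p w y) (hsy : s y < 1) :
    genFun p s w < 1 := by
  obtain ⟨z₀, hpz₀, hz₀y⟩ := exists_pos_of_meanMat_pos hm
  have hle : ∀ z, p w z * ∏ t ∈ z.support, s t ^ z t ≤ p w z := fun z =>
    mul_le_of_le_one_right (hp0 z) (prod_pow_mem_Icc hs z).2
  have hlt : p w z₀ * ∏ t ∈ z₀.support, s t ^ z₀ t < p w z₀ :=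
    mul_lt_of_lt_one_right hpz₀ (prod_pow_lt_one hs hz₀y hsy)
  have hsummable : Summable fun z => p w z * ∏ t ∈ z.support, s t ^ z t :=
    Summable.of_nonneg_of_le (fun z => mul_nonneg (hp0 z) (prod_pow_mem_Icc hs z).1) hle
      hp1.summable
  calc genFun p s w < ∑' z, p w z := hsummable.tsum_lt_tsum hle hlt hp1.summable
    _ = 1 := hp1.tsum_eq

variable [DecidableEq Λ]

lemma lt_one_of_meanPow_pos (hp0 : ∀ x z, 0 ≤ p x z) (hp1 : ∀ x, HasSum (p x) 1)
    (hs : ∀ y, s y ∈ Set.Icc (0 : ℝ) 1) (hfix : genFun p s = s) :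
    ∀ {n : ℕ} {x y : Λ}, 0 < meanPow p n x y → s y < 1 → s x < 1
  | 0, x, y, hpos, hsy => by
    have hxy : x = y := by
      by_contra hxy
      simp [meanPow, hxy] at hpos
    exact hxy ▸ hsy
  | n + 1, x, y, hpos, hsy => by
    obtain ⟨w, hxw, hwy⟩ := exists_meanPow_pos_meanMat_pos hpos
    refine lt_one_of_meanPow_pos hp0 hp1 hs hfix hxw ?_
    rw [← hfix]
    exact genFun_lt_one_of_meanMat_pos (hp0 w) (hp1 w) hs hwy hsy

end FixedPoint

theorem fixed_point_strictly_below_one_general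
    {Λ : Type*} [DecidableEq Λ]
    (p : Λ → (Λ →₀ ℕ) → ℝ)
    (hp0 : ∀ x z, 0 ≤ p x z)
    (hp1 : ∀ x, HasSum (p x) 1)
    -- irreducibility of the mean matrix
    (hirr : ∀ x y : Λ, ∃ n, 1 ≤ n ∧ 0 < meanPow p n x y)
    (s : Λ → ℝ) (hs : ∀ y, s y ∈ Set.Icc (0 : ℝ) 1)
    (hfix : genFun p s = s)
    (hlt : ∃ x, s x < 1) :
    ∀ y, s y < 1 := by
  obtain ⟨x, hx⟩ := hlt
  intro y
  obtain ⟨n, -, hn⟩ := hirr y x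
  exact lt_one_of_meanPow_pos hp0 hp1 hs hfix hn hx

/-- if the mean matrix is irreducible and `s ∈ [0,1]^Λ` is a fixed point
of the generating function with `s_x < 1` for some `x`, then `s_y < 1` for every `y`. -/
theorem fixed_point_strictly_below_one
    {Λ : Type*} [Countable Λ] [DecidableEq Λ]
    (p : Λ → (Λ →₀ ℕ) → ℝ)
    (hp0 : ∀ x z, 0 ≤ p x z)
    (hp1 : ∀ x, HasSum (p x) 1)
    -- irreducibility of the mean matrix
    (hirr : ∀ x y : Λ, ∃ n, 1 ≤ n ∧ 0 < meanPow p n x y)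
    (s : Λ → ℝ) (hs : ∀ y, s y ∈ Set.Icc (0 : ℝ) 1)
    (hfix : genFun p s = s)
    (hlt : ∃ x, s x < 1) :
    ∀ y, s y < 1 :=
  fixed_point_strictly_below_one_general p hp0 hp1 hirr s hs hfix hlt
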